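/- arXiv:0802.2863 — 2 statements merged into one kernel-verified Lean document; each statement's English description precedes it below -/
import Mathlib

section
/- If the transitive closure ⊢*_Γ of the one-step yield relation relates x to y via a sequence of pairs ⟨u_{i_1},v_{i_1}⟩,…,⟨u_{i_k},v_{i_k}⟩, then u_{i_1}·u_{i_2}···u_{i_k}·y = x·v_{i_1}·v_{i_2}···v_{i_k}. -/
/-- A yield derivation from `x` to `y` recording the sequence `ps` of pairs used:
each step `x ⊢ z` via `⟨u,v⟩` means `u·z = x·v`. -/
def YieldSeq {A : Type*} (Γ : List (List A × List A)) :
    List A → List (List A × List A) → List A → Prop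
  | x, [], y => x = y
  | x, p :: ps, y => p ∈ Γ ∧ ∃ z, p.1 ++ z = x ++ p.2 ∧ YieldSeq Γ z ps y

theorem List.append_eq_append_trans {A : Type*} {u v U V x z y : List A}
    (hxz : u ++ z = x ++ v) (hzy : U ++ y = z ++ V) :
    u ++ U ++ y = x ++ (v ++ V) := by
  rw [List.append_assoc, hzy, ← List.append_assoc, hxz, List.append_assoc]

theorem yieldSeq_concat {A : Type*} (Γ : List (List A × List A))
    (x y : List A) (ps : List (List A × List A)) (h : YieldSeq Γ x ps y) :
    (ps.map Prod.fst).flatten ++ y = x ++ (ps.map Prod.snd).flatten := by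
  induction ps generalizing x with
  | nil => simp [h.symm]
  | cons p ps ih =>
    obtain ⟨-, z, hxz, hzy⟩ := h
    simpa only [List.map_cons, List.flatten_cons] using
      List.append_eq_append_trans hxz (ih z hzy)
end

section
/- Under a dynamic binary coding scheme, codes overlap only trivially in encoded strings: if c*(w) = s·c(a)·t for some binary strings s,t and symbol a, then |s| is a multiple of the common code length l, i.e., the occurrence of c(a) is aligned with code boundaries. -/
namespace List

variable {α : Type*}

theorem eq_nil_of_append_eq_of_length_lt {x y r s t : List α}
    (hoverlap : ∀ z, z ≠ [] → z <:+ x → z <+: y → z = x) (hxy : x.length ≤ y.length)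
    (h : x ++ r = s ++ y ++ t) (hs : s.length < x.length) : s = [] := by
  -- the overlap `z` of the two blocks is a nonempty suffix of `x` and a prefix of `y`
  obtain ⟨z, rfl⟩ : s <+: x :=
    prefix_of_prefix_length_le ⟨y ++ t, by simp [h]⟩ (prefix_append x r) hs.le
  have hzr : z ++ r = y ++ t := by simpa using h
  have hz : z ≠ [] := by rintro rfl; simp at hs
  have hzy : z <+: y :=
    prefix_of_prefix_length_le ⟨r, hzr⟩ (prefix_append y t)
      (by rw [length_append] at hxy; omega)
  have hzx := hoverlap z hz (suffix_append s z) hzy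
  simpa using congrArg length hzx

theorem dvd_length_of_flatten_eq {l : ℕ} {y : List α} (hy : y.length = l) :
    ∀ {L : List (List α)}, (∀ x ∈ L, x.length = l) →
      (∀ x ∈ L, ∀ z, z ≠ [] → z <:+ x → z <+: y → z = x) →
      ∀ {s t : List α}, L.flatten = s ++ y ++ t → l ∣ s.length
  | [], _, _, s, t, h => by simp_all
  | x :: L, hL, hoverlap, s, t, h => by
    rw [flatten_cons] at h
    have hx : x.length = l := hL x mem_cons_self
    by_cases hs : s.length < l
    · have hs0 : s = [] :=
        eq_nil_of_append_eq_of_length_lt (hoverlap x mem_cons_self) (by omega) h (by omega)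
      simp [hs0]
    · obtain ⟨s', rfl⟩ : x <+: s :=
        prefix_of_prefix_length_le (prefix_append x _) ⟨y ++ t, by rw [h, append_assoc]⟩
          (by omega)
      have hs' : l ∣ s'.length :=
        dvd_length_of_flatten_eq hy (fun x' hx' => hL x' (mem_cons_of_mem x hx'))
          (fun x' hx' => hoverlap x' (mem_cons_of_mem x hx')) (by simpa using h)
      simpa [hx] using hs'

end List

theorem coding_scheme_aligned_general {A : Type*}
    (c : A → List Bool) (l : ℕ)
    (hl : ∀ a, (c a).length = l)
    (hoverlap : ∀ a b : A, ∀ z : List Bool, z ≠ [] → z <:+ c a → z <+: c b →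
      z = c a ∧ c a = c b) :
    ∀ (w : List A) (s t : List Bool) (a : A),
      (w.map c).flatten = s ++ c a ++ t → l ∣ s.length := by
  intro w s t a h
  refine List.dvd_length_of_flatten_eq (hl a) ?_ ?_ h
  · simp only [List.mem_map]
    rintro _ ⟨b, -, rfl⟩
    exact hl b
  · simp only [List.mem_map]
    rintro _ ⟨b, -, rfl⟩ z hz hzb hza
    exact (hoverlap b a z hz hzb hza).1

/-- Under a dynamic binary coding scheme, any occurrence of a code inside an encoded
string is aligned with code boundaries. -/
theorem coding_scheme_aligned {A : Type*} [Fintype A]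
    (c : A → List Bool) (hc : Function.Injective c) (l : ℕ)
    (hl : ∀ a, (c a).length = l)
    (hoverlap : ∀ a b : A, ∀ z : List Bool, z ≠ [] → z <:+ c a → z <+: c b →
      z = c a ∧ c a = c b) :
    ∀ (w : List A) (s t : List Bool) (a : A),
      (w.map c).flatten = s ++ c a ++ t → l ∣ s.length :=
  coding_scheme_aligned_general c l hl hoverlap
end
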